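/- arXiv:2004.12109 — 9 statements merged into one kernel-verified Lean document; each statement's English description precedes it below -/
import Mathlib

section
/- Let p > q > 0 be coprime integers with negative continued fraction expansion p/q = [a_1,...,a_l] (where each a_i ≥ 2 and [a_1,...,a_l] = a_1 - 1/(a_2 - 1/(... - 1/a_l))). Then length(p/q) + length(p/(p-q)) = 1 + Σ_{i=1}^{l} (a_i - 1), where length denotes the number of terms in the respective negative continued fraction expansion with all coefficients ≥ 2. -/
/-- Evaluation of a negative (Hirzebruch–Jung) continued fraction
`[a_1, ..., a_l] = a_1 - 1/(a_2 - 1/(... - 1/a_l))`. -/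
def ncfEval : List ℤ → ℚ
  | [] => 0
  | [a] => (a : ℚ)
  | a :: rest => (a : ℚ) - 1 / ncfEval rest

/-- `L` is the negative continued fraction expansion of `r` with all coefficients `≥ 2`. -/
def IsNCF (r : ℚ) (L : List ℤ) : Prop :=
  L ≠ [] ∧ (∀ a ∈ L, 2 ≤ a) ∧ ncfEval L = r

/-!
With `r = p / q` and `s = p / (p - q)` one has `r⁻¹ + s⁻¹ = 1`, a relation symmetric in the
expansions `A = a :: A'` of `r` and `B = b :: B'` of `s`; induct on the total length. The leading
coefficient of an expansion is the ceiling of its value, so if `a ≥ 3` then `r > 2`, hence `s < 2`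
and `b = 2`, and `r - 1 = [a - 1, A']` and `ncfEval B'` are again dual: passing to them removes one
term of `B` and lowers `∑ (aᵢ - 1)` by one. The case `b ≥ 3` is symmetric, and `a = b = 2` forces
`r = s = 2`, i.e. `A = B = [2]`.
-/

-- Also for `L = []`, since `ncfEval [] = 0` and `0⁻¹ = 0` in `ℚ`.
lemma ncfEval_cons (a : ℤ) (L : List ℤ) : ncfEval (a :: L) = a - (ncfEval L)⁻¹ := by
  cases L <;> simp [ncfEval]

lemma inv_ncfEval_lt_one {L : List ℤ} (h2 : ∀ a ∈ L, 2 ≤ a) : (ncfEval L)⁻¹ < 1 := by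
  induction L with
  | nil => simp [ncfEval]
  | cons a L ih =>
    have hL := ih fun b hb => h2 b (List.mem_cons_of_mem a hb)
    have ha : (2 : ℚ) ≤ a := by exact_mod_cast h2 a List.mem_cons_self
    rw [ncfEval_cons]
    exact inv_lt_one_of_one_lt₀ (by linarith)

lemma one_lt_ncfEval {L : List ℤ} (hne : L ≠ []) (h2 : ∀ a ∈ L, 2 ≤ a) : 1 < ncfEval L := by
  obtain ⟨a, L, rfl⟩ := List.exists_cons_of_ne_nil hne
  have hL := inv_ncfEval_lt_one fun b hb => h2 b (List.mem_cons_of_mem a hb)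
  have ha : (2 : ℚ) ≤ a := by exact_mod_cast h2 a List.mem_cons_self
  rw [ncfEval_cons]
  linarith

lemma inv_ncfEval_nonneg {L : List ℤ} (h2 : ∀ a ∈ L, 2 ≤ a) : 0 ≤ (ncfEval L)⁻¹ := by
  rcases eq_or_ne L [] with rfl | hne
  · simp [ncfEval]
  · exact inv_nonneg.2 (zero_lt_one.trans (one_lt_ncfEval hne h2)).le

lemma eq_nil_of_inv_ncfEval_eq_zero {L : List ℤ} (h2 : ∀ a ∈ L, 2 ≤ a)
    (h : (ncfEval L)⁻¹ = 0) : L = [] := by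
  by_contra hne
  simp only [inv_eq_zero] at h
  linarith [one_lt_ncfEval hne h2]

lemma isNCF_cons_iff {r : ℚ} {a : ℤ} {L : List ℤ} :
    IsNCF r (a :: L) ↔ 2 ≤ a ∧ (∀ b ∈ L, 2 ≤ b) ∧ r = a - (ncfEval L)⁻¹ := by
  simp only [IsNCF, ne_eq, reduceCtorEq, not_false_eq_true, List.forall_mem_cons, ncfEval_cons,
    true_and, and_assoc, eq_comm]

lemma isNCF_ncfEval {L : List ℤ} (hne : L ≠ []) (h2 : ∀ a ∈ L, 2 ≤ a) : IsNCF (ncfEval L) L :=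
  ⟨hne, h2, rfl⟩

lemma IsNCF.one_lt {r : ℚ} {L : List ℤ} (h : IsNCF r L) : 1 < r :=
  h.2.2 ▸ one_lt_ncfEval h.1 h.2.1

lemma add_eq_mul_of_inv_add_inv_eq_one {r s : ℚ} (hr : r ≠ 0) (hs : s ≠ 0)
    (hrs : r⁻¹ + s⁻¹ = 1) : r + s = r * s := by
  field_simp at hrs
  linear_combination hrs

lemma IsNCF.exists_eq_two_cons_of_three_le {r s : ℚ} {a : ℤ} {A B : List ℤ}
    (hA : IsNCF r (a :: A)) (hB : IsNCF s B) (hrs : r⁻¹ + s⁻¹ = 1) (ha : 3 ≤ a) :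
    ∃ B', B = 2 :: B' ∧ IsNCF (r - 1) ((a - 1) :: A) ∧ IsNCF (ncfEval B') B' ∧
      (r - 1)⁻¹ + (ncfEval B')⁻¹ = 1 := by
  have hr1 := hA.one_lt
  have hs1 := hB.one_lt
  have hrs' := add_eq_mul_of_inv_add_inv_eq_one (by positivity) (by positivity) hrs
  obtain ⟨b, B', rfl⟩ := List.exists_cons_of_ne_nil hB.1
  obtain ⟨-, hA2, hr⟩ := isNCF_cons_iff.1 hA
  obtain ⟨hb, hB2, hs⟩ := isNCF_cons_iff.1 hB
  have hx := inv_ncfEval_lt_one hA2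
  have hy := inv_ncfEval_lt_one hB2
  have ha' : (3 : ℚ) ≤ a := by exact_mod_cast ha
  have hr2 : 2 < r := by linarith
  have hs2 : s < 2 := by nlinarith
  have hb2 : b = 2 := by
    have : b < 3 := by exact_mod_cast (show (b : ℚ) < 3 by linarith)
    omega
  subst hb2
  have hy0 : (ncfEval B')⁻¹ = 2 - s := by push_cast at hs; linarith
  have hB' : B' ≠ [] := by
    rintro rfl
    simp only [ncfEval, inv_zero] at hy0
    linarith
  refine ⟨B', rfl, isNCF_cons_iff.2 ⟨by omega, hA2, by push_cast; linarith⟩,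
    isNCF_ncfEval hB' hB2, ?_⟩
  rw [hy0]
  have : r - 1 ≠ 0 := by linarith
  field_simp
  linear_combination hrs'

lemma IsNCF.eq_nil_of_two_cons {r s : ℚ} {A B : List ℤ} (hA : IsNCF r (2 :: A))
    (hB : IsNCF s (2 :: B)) (hrs : r⁻¹ + s⁻¹ = 1) : A = [] ∧ B = [] := by
  have hr1 := hA.one_lt
  have hs1 := hB.one_lt
  have hrs' := add_eq_mul_of_inv_add_inv_eq_one (by positivity) (by positivity) hrs
  obtain ⟨-, hA2, hr⟩ := isNCF_cons_iff.1 hA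
  obtain ⟨-, hB2, hs⟩ := isNCF_cons_iff.1 hB
  have hx := inv_ncfEval_nonneg hA2
  have hy := inv_ncfEval_nonneg hB2
  push_cast at hr hs
  have : (r - 1) * (s - 1) = 1 := by linear_combination -hrs'
  have hr2 : r = 2 := by nlinarith
  have hs2 : s = 2 := by nlinarith
  exact ⟨eq_nil_of_inv_ncfEval_eq_zero hA2 (by linarith),
    eq_nil_of_inv_ncfEval_eq_zero hB2 (by linarith)⟩

theorem IsNCF.length_add_length_of_inv_add_inv_eq_one {r s : ℚ} {A B : List ℤ}
    (hA : IsNCF r A) (hB : IsNCF s B) (hrs : r⁻¹ + s⁻¹ = 1) :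
    (A.length : ℤ) + B.length = 1 + (A.map (fun a => a - 1)).sum ∧
      (A.length : ℤ) + B.length = 1 + (B.map (fun b => b - 1)).sum := by
  obtain ⟨a, A', rfl⟩ := List.exists_cons_of_ne_nil hA.1
  obtain ⟨b, B', rfl⟩ := List.exists_cons_of_ne_nil hB.1
  by_cases ha : 3 ≤ a
  · obtain ⟨B'', hB'', hA', hB', hrs'⟩ := hA.exists_eq_two_cons_of_three_le hB hrs ha
    cases hB''
    have := hA'.length_add_length_of_inv_add_inv_eq_one hB' hrs'
    simp only [List.length_cons, List.map_cons, List.sum_cons] at this ⊢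
    push_cast at this ⊢
    constructor <;> linarith
  by_cases hb : 3 ≤ b
  · obtain ⟨A'', hA'', hB', hA', hrs'⟩ :=
      hB.exists_eq_two_cons_of_three_le hA (by rwa [add_comm]) hb
    cases hA''
    have := hA'.length_add_length_of_inv_add_inv_eq_one hB' (by rwa [add_comm])
    simp only [List.length_cons, List.map_cons, List.sum_cons] at this ⊢
    push_cast at this ⊢
    constructor <;> linarith
  obtain rfl : a = 2 := le_antisymm (by omega) (isNCF_cons_iff.1 hA).1
  obtain rfl : b = 2 := le_antisymm (by omega) (isNCF_cons_iff.1 hB).1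
  obtain ⟨rfl, rfl⟩ := hA.eq_nil_of_two_cons hB hrs
  norm_num
termination_by A.length + B.length

theorem stmt0_general (p q : ℕ)
    (A B : List ℤ) (hA : IsNCF ((p : ℚ) / q) A) (hB : IsNCF ((p : ℚ) / (p - q)) B) :
    (A.length : ℤ) + B.length = 1 + (A.map (fun a => a - 1)).sum := by
  have hp : (p : ℚ) ≠ 0 := by
    rintro hp
    have := hA.one_lt
    norm_num [hp] at this
  refine (hA.length_add_length_of_inv_add_inv_eq_one hB ?_).1
  rw [inv_div, inv_div, ← add_div, add_sub_cancel, div_self hp]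

theorem stmt0 (p q : ℕ) (hq : 0 < q) (hqp : q < p) (hcop : Nat.Coprime p q)
    (A B : List ℤ) (hA : IsNCF ((p : ℚ) / q) A) (hB : IsNCF ((p : ℚ) / (p - q)) B) :
    (A.length : ℤ) + B.length = 1 + (A.map (fun a => a - 1)).sum :=
  stmt0_general p q A B hA hB
end

section
/- Let Q be the n×n tridiagonal integer matrix with diagonal entries -v_1,...,-v_n where each v_i ≥ 2, and off-diagonal entries Q_{i,i+1} = Q_{i+1,i} = 1. Then Q is invertible and every entry of Q^{-1} is strictly negative. -/
/-!
`-Q = diagonal v - A`, where `A` is the adjacency matrix of the path graph, is a Z-matrix whose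
row sums `vᵢ - deg i` are nonnegative, and positive in the first row. Such a matrix obeys a strong
minimum principle: if `-Q x ≥ 0` and `x` has a nonpositive entry, then at a minimum of `x` every
term of `(-Q x)ᵢ` is forced to vanish, so the neighbours of a minimum are minima as well. Along the
connected path `x` is then constant, and the positive row sum forces that constant to be `0`.
Hence `-Q` is injective, so invertible, and each column of `(-Q)⁻¹`, which solves `-Q x = eⱼ ≠ 0`,
is strictly positive.
-/

open Matrix Finset

namespace SimpleGraph

variable {V : Type*} {G : SimpleGraph V}

theorem Preconnected.forall_of_adj (hG : G.Preconnected) {p : V → Prop}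
    (hp : ∀ u v, G.Adj u v → p u → p v) {u : V} (hu : p u) (v : V) : p v := by
  induction (reachable_iff_reflTransGen u v).1 (hG u v) with
  | refl => exact hu
  | tail _ hadj ih => exact hp _ _ hadj ih

variable {n : ℕ}

instance pathGraph.decidableRelAdj : DecidableRel (pathGraph n).Adj :=
  fun _ _ => decidable_of_iff' _ pathGraph_adj

theorem pathGraph_degree_le (i : Fin n) :
    (pathGraph n).degree i ≤ if (i : ℕ) = 0 then 1 else 2 := by
  let below : Finset (Fin n) := {j | (j : ℕ) + 1 = i}
  let above : Finset (Fin n) := {j | (i : ℕ) + 1 = j}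
  have hsub : (pathGraph n).neighborFinset i ⊆ below ∪ above := by
    intro j hj
    simp only [mem_neighborFinset, pathGraph_adj] at hj
    simp only [below, above, mem_union, mem_filter, mem_univ, true_and]
    omega
  have hbelow : #below ≤ if (i : ℕ) = 0 then 0 else 1 := by
    split_ifs with hi
    · simp [below, hi]
    · exact card_le_one.2 fun a ha b hb => Fin.ext (by simp only [below, mem_filter] at ha hb; omega)
  have habove : #above ≤ 1 :=
    card_le_one.2 fun a ha b hb => Fin.ext (by simp only [above, mem_filter] at ha hb; omega)
  rw [← card_neighborFinset_eq_degree]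
  have := (card_le_card hsub).trans (card_union_le _ _)
  split_ifs at hbelow ⊢ <;> omega

end SimpleGraph

namespace Matrix

variable {K ι : Type*} [Field K] [LinearOrder K] [IsStrictOrderedRing K] [Fintype ι]

/-- For a Z-matrix, nonnegative row sums is weak diagonal dominance; one positive row sum together
with the connected graph `G` carried by nonzero entries makes it irreducibly diagonally dominant. -/
structure IsIrreduciblyDominantZMatrix (G : SimpleGraph ι) (M : Matrix ι ι K) : Prop where
  preconnected : G.Preconnected
  nonpos_of_ne : ∀ i j, i ≠ j → M i j ≤ 0
  ne_zero_of_adj : ∀ i j, G.Adj i j → M i j ≠ 0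
  sum_row_nonneg : ∀ i, 0 ≤ ∑ j, M i j
  exists_sum_row_pos : ∃ i, 0 < ∑ j, M i j

theorem eq_of_adj_of_isMin_of_nonneg_mulVec {G : SimpleGraph ι} {M : Matrix ι ι K}
    (hZ : ∀ i j, i ≠ j → M i j ≤ 0) (hG : ∀ i j, G.Adj i j → M i j ≠ 0)
    (hrow : ∀ i, 0 ≤ ∑ j, M i j) {x : ι → K} {i : ι}
    (hx : 0 ≤ (M *ᵥ x) i) (hmin : ∀ j, x i ≤ x j) (hxi : x i ≤ 0) :
    (∀ j, G.Adj i j → x j = x i) ∧ x i * ∑ j, M i j = 0 := by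
  have hsplit : (M *ᵥ x) i = ∑ j, M i j * (x j - x i) + x i * ∑ j, M i j := by
    simp only [mulVec, dotProduct, mul_sub, sum_sub_distrib, ← sum_mul]
    ring
  have hterm : ∀ j ∈ univ, M i j * (x j - x i) ≤ 0 := by
    intro j _
    rcases eq_or_ne i j with rfl | hij
    · simp
    · exact mul_nonpos_of_nonpos_of_nonneg (hZ i j hij) (sub_nonneg.2 (hmin j))
  have hrow' : x i * ∑ j, M i j ≤ 0 := mul_nonpos_of_nonpos_of_nonneg hxi (hrow i)
  have hsum : ∑ j, M i j * (x j - x i) = 0 := by linarith [sum_nonpos hterm]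
  refine ⟨fun j hj => ?_, by linarith⟩
  have := (sum_eq_zero_iff_of_nonpos hterm).1 hsum j (mem_univ j)
  exact sub_eq_zero.1 ((mul_eq_zero.1 this).resolve_left (hG i j hj))

namespace IsIrreduciblyDominantZMatrix

variable {G : SimpleGraph ι} {M : Matrix ι ι K}

theorem eq_zero_or_pos_of_nonneg_mulVec (hM : IsIrreduciblyDominantZMatrix G M) {x : ι → K}
    (hx : 0 ≤ M *ᵥ x) : x = 0 ∨ ∀ i, 0 < x i := by
  refine or_iff_not_imp_right.2 fun hpos => ?_
  obtain ⟨i₀, hi₀⟩ := not_forall.1 hpos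
  obtain ⟨i, -, hmin⟩ := exists_min_image univ x ⟨i₀, mem_univ _⟩
  have hxi : x i ≤ 0 := (hmin i₀ (mem_univ _)).trans (not_lt.1 hi₀)
  have hminOn : ∀ j, x j = x i → ∀ l, x j ≤ x l := fun j hj l => hj ▸ hmin l (mem_univ l)
  have hconst : ∀ j, x j = x i := by
    refine hM.preconnected.forall_of_adj (p := fun j => x j = x i) (fun j k hjk hj => ?_) rfl
    have := eq_of_adj_of_isMin_of_nonneg_mulVec hM.nonpos_of_ne hM.ne_zero_of_adj
      hM.sum_row_nonneg (hx j) (hminOn j hj) (hj ▸ hxi)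
    exact this.1 k hjk ▸ hj
  obtain ⟨k, hk⟩ := hM.exists_sum_row_pos
  have hxk : x k * ∑ j, M k j = 0 :=
    (eq_of_adj_of_isMin_of_nonneg_mulVec hM.nonpos_of_ne hM.ne_zero_of_adj hM.sum_row_nonneg
      (hx k) (hminOn k (hconst k)) (hconst k ▸ hxi)).2
  funext j
  rw [Pi.zero_apply, hconst j, ← hconst k]
  exact (mul_eq_zero.1 hxk).resolve_right hk.ne'

theorem eq_zero_of_mulVec_eq_zero (hM : IsIrreduciblyDominantZMatrix G M) {x : ι → K}
    (hx : M *ᵥ x = 0) : x = 0 := by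
  obtain ⟨k, -⟩ := hM.exists_sum_row_pos
  refine (hM.eq_zero_or_pos_of_nonneg_mulVec hx.ge).resolve_right fun hpos => ?_
  have hnegx : M *ᵥ -x = 0 := by rw [mulVec_neg, hx, neg_zero]
  rcases hM.eq_zero_or_pos_of_nonneg_mulVec hnegx.ge with h | h
  · exact (hpos k).ne' (by simpa using congrFun h k)
  · exact lt_asymm (hpos k) (by simpa using h k)

theorem mulVec_injective (hM : IsIrreduciblyDominantZMatrix G M) :
    Function.Injective M.mulVec := fun x y hxy =>
  sub_eq_zero.1 (hM.eq_zero_of_mulVec_eq_zero (by rw [mulVec_sub, hxy, sub_self]))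

theorem isUnit [DecidableEq ι] (hM : IsIrreduciblyDominantZMatrix G M) : IsUnit M :=
  mulVec_injective_iff_isUnit.1 hM.mulVec_injective

theorem inv_pos [DecidableEq ι] (hM : IsIrreduciblyDominantZMatrix G M) (i j : ι) :
    0 < M⁻¹ i j := by
  have hcol : M *ᵥ M⁻¹.col j = Pi.single j 1 := by
    rw [← mulVec_single_one, mulVec_mulVec,
      mul_nonsing_inv _ ((isUnit_iff_isUnit_det M).1 hM.isUnit), one_mulVec]
  have hne : M⁻¹.col j ≠ 0 := fun h => by simpa [h] using congrFun hcol j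
  have hnonneg : 0 ≤ M *ᵥ M⁻¹.col j := hcol ▸ Pi.single_nonneg.2 zero_le_one
  exact (hM.eq_zero_or_pos_of_nonneg_mulVec hnonneg).resolve_left hne i

end IsIrreduciblyDominantZMatrix

theorem isIrreduciblyDominantZMatrix_diagonal_sub_adjMatrix {G : SimpleGraph ι} [DecidableEq ι]
    [DecidableRel G.Adj] (hG : G.Preconnected) {d : ι → K} (hd : ∀ i, (G.degree i : K) ≤ d i)
    (hpos : ∃ i, (G.degree i : K) < d i) :
    IsIrreduciblyDominantZMatrix G (diagonal d - G.adjMatrix K) := by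
  have hrow : ∀ i, ∑ j, (diagonal d - G.adjMatrix K) i j = d i - G.degree i := by
    intro i
    simp [sub_apply, diagonal_apply, sum_sub_distrib, SimpleGraph.adjMatrix_apply, sum_boole,
      ← SimpleGraph.neighborFinset_eq_filter]
  refine ⟨hG, fun i j hij => ?_, fun i j hij => ?_, fun i => ?_, ?_⟩
  · simp only [sub_apply, diagonal_apply_ne _ hij, SimpleGraph.adjMatrix_apply, zero_sub,
      neg_nonpos]
    positivity
  · simp [sub_apply, diagonal_apply_ne _ hij.ne, SimpleGraph.adjMatrix_apply, hij]
  · rw [hrow]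
    exact sub_nonneg.2 (hd i)
  · obtain ⟨i, hi⟩ := hpos
    exact ⟨i, by rw [hrow]; exact sub_pos.2 hi⟩

theorem isIrreduciblyDominantZMatrix_diagonal_sub_pathGraph_adjMatrix {n : ℕ} (hn : 0 < n)
    {d : Fin n → K} (hd : ∀ i, 2 ≤ d i) :
    IsIrreduciblyDominantZMatrix (SimpleGraph.pathGraph n)
      (diagonal d - (SimpleGraph.pathGraph n).adjMatrix K) := by
  refine isIrreduciblyDominantZMatrix_diagonal_sub_adjMatrix (SimpleGraph.pathGraph_preconnected n)
    (fun i => (?_ : _ ≤ (2 : K)).trans (hd i)) ⟨⟨0, hn⟩, (?_ : _ ≤ (1 : K)).trans_lt ?_⟩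
  · exact_mod_cast (SimpleGraph.pathGraph_degree_le i).trans (by split_ifs <;> norm_num)
  · exact_mod_cast SimpleGraph.pathGraph_degree_le (⟨0, hn⟩ : Fin n)
  · linarith [hd ⟨0, hn⟩]

end Matrix

open SimpleGraph in
theorem stmt1 (n : ℕ) (v : Fin n → ℤ) (hv : ∀ i, 2 ≤ v i)
    (Q : Matrix (Fin n) (Fin n) ℚ)
    (hQ : ∀ i j, Q i j =
      if i = j then -(v i : ℚ)
      else if (i : ℕ) + 1 = (j : ℕ) ∨ (j : ℕ) + 1 = (i : ℕ) then 1 else 0) :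
    IsUnit Q.det ∧ ∀ i j, Q⁻¹ i j < 0 := by
  obtain rfl | hn := Nat.eq_zero_or_pos n
  · exact ⟨by simp, fun i => i.elim0⟩
  have hnegQ : -Q = diagonal (fun i => (v i : ℚ)) - (pathGraph n).adjMatrix ℚ := by
    ext i j
    rcases eq_or_ne i j with rfl | hij
    · simp [hQ]
    · simp [hQ, hij, pathGraph_adj]
  have hM : IsIrreduciblyDominantZMatrix (pathGraph n) (-Q) := hnegQ ▸
    isIrreduciblyDominantZMatrix_diagonal_sub_pathGraph_adjMatrix hn fun i => by exact_mod_cast hv i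
  have hQinv : Q⁻¹ = -(-Q)⁻¹ := inv_eq_right_inv <| by
    rw [mul_neg, ← neg_mul, mul_nonsing_inv _ ((isUnit_iff_isUnit_det _).1 hM.isUnit)]
  refine ⟨(isUnit_iff_isUnit_det Q).1 (by simpa using hM.isUnit.neg), fun i j => ?_⟩
  rw [hQinv, Matrix.neg_apply, neg_lt_zero]
  exact hM.inv_pos i j
end

section
/- Let Q be the n×n negative definite tridiagonal matrix with diagonal entries -v_i (v_i ≥ 2) and off-diagonal entries 1 as above, and define f(z) = z^T Q^{-1} z for z ∈ ℝ^n. Let y = (-v_1+2, ..., -v_n+2) and let D = {x ∈ ℝ^n : |x_i| ≤ |y_i| for all i}. Then for every x ∈ D with |x_{i}| < |y_{i}| for at least one index i, one has f(x) > f(y). -/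
open Matrix

lemma sum_coe_eq {n : ℕ} (c : ℕ) (g : Fin n → ℝ) :
    ∑ j : Fin n, (if (j : ℕ) = c then g j else 0) =
      if h : c < n then g ⟨c, h⟩ else 0 := by
  split_ifs with h
  · have hcond : ∀ j : Fin n, ((j : ℕ) = c) = (j = ⟨c, h⟩) := by
      intro j; simp [Fin.ext_iff]
    simp_rw [hcond]
    simp
  · have : ∀ j : Fin n, (j : ℕ) ≠ c := by
      intro j hj; exact h (hj ▸ j.isLt)
    simp [this]

lemma mulVec_expand {n : ℕ} (v : Fin n → ℤ) (Q : Matrix (Fin n) (Fin n) ℝ)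
    (hQ : ∀ i j, Q i j =
      if i = j then -(v i : ℝ)
      else if (i : ℕ) + 1 = (j : ℕ) ∨ (j : ℕ) + 1 = (i : ℕ) then 1 else 0)
    (w : Fin n → ℝ) (i : Fin n) :
    Q.mulVec w i = -(v i : ℝ) * w i
      + (if h : (i : ℕ) + 1 < n then w ⟨(i : ℕ) + 1, h⟩ else 0)
      + (if 0 < (i : ℕ) then w ⟨(i : ℕ) - 1, lt_of_le_of_lt (Nat.sub_le _ _) i.isLt⟩ else 0) := by
  have hsplit : ∀ j : Fin n, Q i j * w j =
      (if j = i then -(v i : ℝ) * w j else 0)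
      + (if (j : ℕ) = (i : ℕ) + 1 then w j else 0)
      + (if (j : ℕ) + 1 = (i : ℕ) then w j else 0) := by
    intro j
    rcases eq_or_ne j i with rfl | hji
    · have h1 : ¬((j : ℕ) = (j : ℕ) + 1) := by omega
      have h2 : ¬((j : ℕ) + 1 = (j : ℕ)) := by omega
      rw [hQ, if_pos rfl, if_pos rfl, if_neg h1, if_neg h2]
      ring
    · have hij : i ≠ j := Ne.symm hji
      by_cases h1 : (i : ℕ) + 1 = (j : ℕ)
      · have h2 : ¬((j : ℕ) + 1 = (i : ℕ)) := by omega
        have h3 : (j : ℕ) = (i : ℕ) + 1 := h1.symm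
        rw [hQ, if_neg hij, if_pos (Or.inl h1), if_neg hji, if_pos h3, if_neg h2]
        ring
      · by_cases h2 : (j : ℕ) + 1 = (i : ℕ)
        · have h3 : ¬((j : ℕ) = (i : ℕ) + 1) := by omega
          rw [hQ, if_neg hij, if_pos (Or.inr h2), if_neg hji, if_neg h3, if_pos h2]
          ring
        · have h3 : ¬((j : ℕ) = (i : ℕ) + 1) := by omega
          rw [hQ, if_neg hij, if_neg (not_or.mpr ⟨h1, h2⟩), if_neg hji, if_neg h3, if_neg h2]
          ring
  have hmv : Q.mulVec w i = ∑ j, Q i j * w j := rfl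
  rw [hmv]
  simp_rw [hsplit]
  rw [Finset.sum_add_distrib, Finset.sum_add_distrib]
  congr 1
  · congr 1
    · rw [Finset.sum_ite_eq' Finset.univ i (fun j => -(v i : ℝ) * w j)]
      simp
    · rw [sum_coe_eq ((i : ℕ) + 1) w]
  · by_cases h0 : 0 < (i : ℕ)
    · have hcond : ∀ j : Fin n, ((j : ℕ) + 1 = (i : ℕ)) = ((j : ℕ) = (i : ℕ) - 1) := by
        intro j
        have : ((j : ℕ) + 1 = (i : ℕ)) ↔ ((j : ℕ) = (i : ℕ) - 1) := by omega
        exact propext this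
      simp_rw [hcond]
      rw [sum_coe_eq ((i : ℕ) - 1) w]
      have hlt : (i : ℕ) - 1 < n := lt_of_le_of_lt (Nat.sub_le _ _) i.isLt
      simp [hlt, h0]
    · have hcond : ∀ j : Fin n, ¬((j : ℕ) + 1 = (i : ℕ)) := by
        intro j; omega
      simp [hcond, h0]

lemma key_nonneg {n : ℕ} (v : Fin n → ℤ) (hv : ∀ i, 2 ≤ v i)
    (Q : Matrix (Fin n) (Fin n) ℝ)
    (hQ : ∀ i j, Q i j =
      if i = j then -(v i : ℝ)
      else if (i : ℕ) + 1 = (j : ℕ) ∨ (j : ℕ) + 1 = (i : ℕ) then 1 else 0)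
    (w : Fin n → ℝ) (hw : ∀ i, Q.mulVec w i ≤ 0) : ∀ i, 0 ≤ w i := by
  by_contra hcon
  push_neg at hcon
  obtain ⟨i0, hi0⟩ := hcon
  obtain ⟨im, -, him⟩ := Finset.exists_min_image Finset.univ w ⟨i0, Finset.mem_univ _⟩
  set m := w im with hmdef
  have hm : ∀ j, m ≤ w j := fun j => him j (Finset.mem_univ j)
  have hmneg : m < 0 := lt_of_le_of_lt (hm i0) hi0
  have hvm : ∀ i : Fin n, (v i : ℝ) * m ≤ 2 * m := by
    intro i
    have h2 : (2 : ℝ) ≤ (v i : ℝ) := by exact_mod_cast hv i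
    exact mul_le_mul_of_nonpos_right h2 hmneg.le
  have hup : ∀ i : Fin n,
      m ≤ (if h : (i : ℕ) + 1 < n then w ⟨(i : ℕ) + 1, h⟩ else 0) := by
    intro i
    split_ifs with h
    · exact hm _
    · exact hmneg.le
  have key : ∀ k, ∀ i : Fin n, (i : ℕ) = k → w i = m → False := by
    intro k
    induction k with
    | zero =>
      intro i hik hwi
      have hexp := mulVec_expand v Q hQ w i
      have hi0' : ¬ (0 < (i : ℕ)) := by omega
      rw [if_neg hi0'] at hexp
      have h1 := hw i
      rw [hexp, hwi] at h1
      have h2 := hup i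
      have h3 := hvm i
      linarith
    | succ k ih =>
      intro i hik hwi
      have hexp := mulVec_expand v Q hQ w i
      have hi0' : 0 < (i : ℕ) := by omega
      rw [if_pos hi0'] at hexp
      set j : Fin n := ⟨(i : ℕ) - 1, lt_of_le_of_lt (Nat.sub_le _ _) i.isLt⟩ with hjdef
      have h1 := hw i
      rw [hexp, hwi] at h1
      have h2 := hup i
      have h3 := hvm i
      have h4 : m ≤ w j := hm j
      have h5 : w j = m := by linarith
      exact ih j (by simp [hjdef]; omega) h5
  exact key (im : ℕ) im rfl rfl

theorem stmt2 (n : ℕ) (v : Fin n → ℤ) (hv : ∀ i, 2 ≤ v i)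
    (Q : Matrix (Fin n) (Fin n) ℝ)
    (hQ : ∀ i j, Q i j =
      if i = j then -(v i : ℝ)
      else if (i : ℕ) + 1 = (j : ℕ) ∨ (j : ℕ) + 1 = (i : ℕ) then 1 else 0)
    (f : (Fin n → ℝ) → ℝ) (hf : ∀ z, f z = z ⬝ᵥ Q⁻¹.mulVec z)
    (y : Fin n → ℝ) (hy : ∀ i, y i = -(v i : ℝ) + 2)
    (x : Fin n → ℝ) (hxD : ∀ i, |x i| ≤ |y i|) (hstrict : ∃ i, |x i| < |y i|) :
    f x > f y := by
  -- invertibility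
  have hdet : IsUnit Q.det := by
    rw [isUnit_iff_ne_zero]
    intro hdet0
    obtain ⟨u, hu0, hu⟩ := (Matrix.exists_mulVec_eq_zero_iff).mpr hdet0
    have h1 : ∀ i, 0 ≤ u i := by
      apply key_nonneg v hv Q hQ
      intro i; rw [hu]; simp
    have h2 : ∀ i, 0 ≤ (-u) i := by
      apply key_nonneg v hv Q hQ
      intro i
      rw [Matrix.mulVec_neg, hu]
      simp
    apply hu0
    funext i
    have := h1 i
    have := h2 i
    simp at this ⊢
    linarith
  have hinv : Q * Q⁻¹ = 1 := Matrix.mul_nonsing_inv Q hdet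
  have hcol : ∀ j i, Q.mulVec (fun k => Q⁻¹ k j) i = if i = j then 1 else 0 := by
    intro j i
    have h1 : (Q * Q⁻¹) i j = (1 : Matrix (Fin n) (Fin n) ℝ) i j := by rw [hinv]
    rw [Matrix.mul_apply, Matrix.one_apply] at h1
    exact h1
  have hNle : ∀ i j, Q⁻¹ i j ≤ 0 := by
    intro i j
    have h1 : ∀ i', 0 ≤ (fun k => -(Q⁻¹ k j)) i' := by
      apply key_nonneg v hv Q hQ
      intro i'
      have h2 : (fun k => -(Q⁻¹ k j)) = -(fun k => Q⁻¹ k j) := by funext k; simp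
      rw [h2, Matrix.mulVec_neg]
      simp only [Pi.neg_apply]
      rw [hcol j i']
      split_ifs <;> norm_num
    have := h1 i
    simp at this
    linarith
  have hNdiag : ∀ j, Q⁻¹ j j < 0 := by
    intro j
    have hexp := mulVec_expand v Q hQ (fun k => Q⁻¹ k j) j
    rw [hcol j j, if_pos rfl] at hexp
    have huple : (if h : (j : ℕ) + 1 < n then (fun k => Q⁻¹ k j) ⟨(j : ℕ) + 1, h⟩ else 0) ≤ 0 := by
      split_ifs with h
      · exact hNle _ _
      · exact le_refl 0
    have hdnle : (if 0 < (j : ℕ) then (fun k => Q⁻¹ k j)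
        ⟨(j : ℕ) - 1, lt_of_le_of_lt (Nat.sub_le _ _) j.isLt⟩ else 0) ≤ 0 := by
      split_ifs with h
      · exact hNle _ _
      · exact le_refl 0
    have hvj : (2 : ℝ) ≤ (v j : ℝ) := by exact_mod_cast hv j
    by_contra hcc
    push_neg at hcc
    simp only at hexp huple hdnle
    nlinarith [mul_nonneg (by linarith : (0:ℝ) ≤ (v j : ℝ)) hcc]
  -- properties of y
  have hy0 : ∀ i, y i ≤ 0 := by
    intro i
    have h2 : (2 : ℝ) ≤ (v i : ℝ) := by exact_mod_cast hv i
    rw [hy i]; linarith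
  have habsy : ∀ i, |y i| = -y i := fun i => abs_of_nonpos (hy0 i)
  -- termwise comparison
  have term_le : ∀ i j : Fin n, y i * (Q⁻¹ i j * y j) ≤ x i * (Q⁻¹ i j * x j) := by
    intro i j
    have h1 : x i * x j ≤ y i * y j := by
      calc x i * x j ≤ |x i * x j| := le_abs_self _
        _ = |x i| * |x j| := abs_mul _ _
        _ ≤ |y i| * |y j| := mul_le_mul (hxD i) (hxD j) (abs_nonneg _) (abs_nonneg _)
        _ = y i * y j := by rw [habsy, habsy]; ring
    have h2 := mul_le_mul_of_nonpos_left h1 (hNle i j)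
    nlinarith [h2]
  obtain ⟨i0, hi0⟩ := hstrict
  have term_lt : y i0 * (Q⁻¹ i0 i0 * y i0) < x i0 * (Q⁻¹ i0 i0 * x i0) := by
    have h1 : x i0 * x i0 < y i0 * y i0 := by
      calc x i0 * x i0 = |x i0| * |x i0| := (abs_mul_abs_self _).symm
        _ < |y i0| * |y i0| := mul_self_lt_mul_self (abs_nonneg _) hi0
        _ = y i0 * y i0 := abs_mul_abs_self _
    have h2 := mul_lt_mul_of_neg_left h1 (hNdiag i0)
    nlinarith [h2]
  rw [hf, hf]
  show y ⬝ᵥ Q⁻¹.mulVec y < x ⬝ᵥ Q⁻¹.mulVec x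
  have hdp : ∀ z : Fin n → ℝ, z ⬝ᵥ Q⁻¹.mulVec z = ∑ i, ∑ j, z i * (Q⁻¹ i j * z j) := by
    intro z
    simp [dotProduct, Matrix.mulVec, Finset.mul_sum]
  rw [hdp, hdp]
  apply Finset.sum_lt_sum
  · intro i _
    exact Finset.sum_le_sum (fun j _ => term_le i j)
  · refine ⟨i0, Finset.mem_univ _, ?_⟩
    apply Finset.sum_lt_sum
    · intro j _; exact term_le i0 j
    · exact ⟨i0, Finset.mem_univ _, term_lt⟩
end

section
/- Define μ_i by μ_1 = 1, μ_2 = a_1, μ_i = a_{i-1} μ_{i-1} - μ_{i-2}, with a_i ≥ 2. Let r_1, ..., r_n be integers with |r_i| ≤ a_i - 2 for every i. If r_n ≠ 0, then |r_n μ_n| > |Σ_{i=1}^{n-1} r_i μ_i|. -/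
lemma aux4 (a : ℕ → ℤ) (ha : ∀ i, 2 ≤ a i)
    (μ : ℕ → ℤ) (hμ1 : μ 1 = 1) (hμ2 : μ 2 = a 1)
    (hrec : ∀ i, 3 ≤ i → μ i = a (i - 1) * μ (i - 1) - μ (i - 2)) :
    ∀ n, 1 ≤ n → (∀ i ∈ Finset.Icc 1 n, 1 ≤ μ i) ∧
      μ (n + 1) = μ n + 1 + ∑ i ∈ Finset.Icc 1 n, (a i - 2) * μ i := by
  intro n hn
  induction n with
  | zero => omega
  | succ m ih =>
    rcases Nat.lt_or_ge m 1 with h | h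
    · -- m = 0
      have hm : m = 0 := by omega
      subst hm
      constructor
      · intro i hi
        simp only [Finset.mem_Icc] at hi
        have : i = 1 := by omega
        subst this; rw [hμ1]
      · simp only [Finset.Icc_self, Finset.sum_singleton]
        rw [hμ1, hμ2]; ring
    · obtain ⟨hpos, heq⟩ := ih h
      have hsumnn : 0 ≤ ∑ i ∈ Finset.Icc 1 m, (a i - 2) * μ i := by
        apply Finset.sum_nonneg
        intro i hi
        have h1 := ha i
        have h2 := hpos i hi
        nlinarith
      have hμm : 1 ≤ μ m := hpos m (by simp [Finset.mem_Icc]; omega)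
      have hμm1 : 1 ≤ μ (m + 1) := by rw [heq]; linarith
      have hrec' : μ (m + 2) = a (m + 1) * μ (m + 1) - μ m := by
        have := hrec (m + 2) (by omega)
        simpa using this
      constructor
      · intro i hi
        simp only [Finset.mem_Icc] at hi
        rcases Nat.lt_or_ge i (m + 1) with h' | h'
        · exact hpos i (by simp [Finset.mem_Icc]; omega)
        · have : i = m + 1 := by omega
          subst this; exact hμm1
      · rw [Finset.sum_Icc_succ_top (by omega : 1 ≤ m + 1)]
        have hμdiff : μ (m + 1) - μ m = 1 + ∑ i ∈ Finset.Icc 1 m, (a i - 2) * μ i := by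
          rw [heq]; ring
        rw [hrec']
        linarith [hμdiff]

theorem stmt4 (a : ℕ → ℤ) (ha : ∀ i, 2 ≤ a i)
    (μ : ℕ → ℤ) (hμ1 : μ 1 = 1) (hμ2 : μ 2 = a 1)
    (hrec : ∀ i, 3 ≤ i → μ i = a (i - 1) * μ (i - 1) - μ (i - 2))
    (r : ℕ → ℤ) (hr : ∀ i, |r i| ≤ a i - 2)
    (n : ℕ) (hn : 1 ≤ n) (hrn : r n ≠ 0) :
    |∑ i ∈ Finset.Icc 1 (n - 1), r i * μ i| < |r n * μ n| := by
  have hrabs : 1 ≤ |r n| := by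
    rcases abs_pos.mpr hrn with h; omega
  rcases Nat.lt_or_ge n 2 with h2 | h2
  · have : n = 1 := by omega
    subst this
    have : Finset.Icc 1 (1 - 1) = (∅ : Finset ℕ) := rfl
    rw [this, Finset.sum_empty, abs_zero, abs_mul, hμ1, abs_one, mul_one]
    omega
  · obtain ⟨m, rfl⟩ : ∃ m, n = m + 1 := ⟨n - 1, by omega⟩
    have hm : 1 ≤ m := by omega
    obtain ⟨hpos, heq⟩ := aux4 a ha μ hμ1 hμ2 hrec m hm
    have hμm : 1 ≤ μ m := hpos m (by simp [Finset.mem_Icc]; omega)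
    have hμm1 : 1 ≤ μ (m + 1) := by
      have hsumnn : 0 ≤ ∑ i ∈ Finset.Icc 1 m, (a i - 2) * μ i := by
        apply Finset.sum_nonneg
        intro i hi
        have h1 := ha i
        have h2 := hpos i hi
        nlinarith
      rw [heq]; linarith
    have hstep1 : |∑ i ∈ Finset.Icc 1 m, r i * μ i| ≤
        ∑ i ∈ Finset.Icc 1 m, (a i - 2) * μ i := by
      calc |∑ i ∈ Finset.Icc 1 m, r i * μ i| ≤ ∑ i ∈ Finset.Icc 1 m, |r i * μ i| :=
            Finset.abs_sum_le_sum_abs _ _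
        _ ≤ ∑ i ∈ Finset.Icc 1 m, (a i - 2) * μ i := by
            apply Finset.sum_le_sum
            intro i hi
            rw [abs_mul, abs_of_nonneg (by linarith [hpos i hi] : 0 ≤ μ i)]
            have := hr i
            have := hpos i hi
            nlinarith [abs_nonneg (r i)]
    have hstep2 : ∑ i ∈ Finset.Icc 1 m, (a i - 2) * μ i < μ (m + 1) := by
      rw [heq] at *
      linarith
    have hstep3 : μ (m + 1) ≤ |r (m + 1) * μ (m + 1)| := by
      rw [abs_mul, abs_of_nonneg (by linarith : 0 ≤ μ (m + 1))]
      nlinarith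
    simp only [Nat.add_sub_cancel]
    calc |∑ i ∈ Finset.Icc 1 m, r i * μ i| < μ (m + 1) := lt_of_le_of_lt hstep1 hstep2
      _ ≤ |r (m + 1) * μ (m + 1)| := hstep3
end

section
/- Define μ_i by μ_1 = 1, μ_2 = a_1, μ_i = a_{i-1} μ_{i-1} - μ_{i-2}, with all a_i ≥ 2, and let r_1, ..., r_n be integers with |r_i| ≤ a_i - 2 for all i. If Σ_{i=1}^{n} r_i μ_i = 0, then r_i = 0 for every i. -/
theorem stmt5 (a : ℕ → ℤ) (ha : ∀ i, 2 ≤ a i)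
    (μ : ℕ → ℤ) (hμ1 : μ 1 = 1) (hμ2 : μ 2 = a 1)
    (hrec : ∀ i, 3 ≤ i → μ i = a (i - 1) * μ (i - 1) - μ (i - 2))
    (r : ℕ → ℤ) (hr : ∀ i, |r i| ≤ a i - 2)
    (n : ℕ) (hsum : ∑ i ∈ Finset.Icc 1 n, r i * μ i = 0) :
    ∀ i ∈ Finset.Icc 1 n, r i = 0 := by
  have key : ∀ i, 1 ≤ i → 1 ≤ μ i ∧ μ i + 1 ≤ μ (i + 1) := by
    intro i hi
    induction i with
    | zero => omega
    | succ k ih =>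
      rcases Nat.eq_or_lt_of_le hi with h | h
      · have hk0 : k = 0 := by omega
        subst hk0
        refine ⟨by rw [hμ1], ?_⟩
        rw [hμ1, hμ2]; linarith [ha 1]
      · have hk : 1 ≤ k := by omega
        obtain ⟨h1, h2⟩ := ih hk
        have h3 : 1 ≤ μ (k + 1) := by linarith
        refine ⟨h3, ?_⟩
        have hrec' := hrec (k + 2) (by omega)
        have e1 : k + 2 - 1 = k + 1 := by omega
        have e2 : k + 2 - 2 = k := by omega
        rw [e1, e2] at hrec'
        have ha' := ha (k + 1)
        nlinarith
  have ident : ∀ k, 1 ≤ k →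
      ∑ i ∈ Finset.Icc 1 k, (a i - 2) * μ i = μ (k + 1) - μ k - 1 := by
    intro k hk
    induction k with
    | zero => omega
    | succ m ih =>
      rcases Nat.eq_or_lt_of_le hk with h | h
      · have hm0 : m = 0 := by omega
        subst hm0
        simp [hμ1, hμ2]; ring
      · have hm : 1 ≤ m := by omega
        rw [Finset.sum_Icc_succ_top (by omega : 1 ≤ m + 1), ih hm]
        have hrec' := hrec (m + 2) (by omega)
        have e1 : m + 2 - 1 = m + 1 := by omega
        have e2 : m + 2 - 2 = m := by omega
        rw [e1, e2] at hrec'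
        have : m + 1 + 1 = m + 2 := by omega
        rw [this, hrec']
        ring
  have bound : ∀ k, |∑ i ∈ Finset.Icc 1 k, r i * μ i| < μ (k + 1) := by
    intro k
    have habs : |∑ i ∈ Finset.Icc 1 k, r i * μ i|
        ≤ ∑ i ∈ Finset.Icc 1 k, (a i - 2) * μ i := by
      calc |∑ i ∈ Finset.Icc 1 k, r i * μ i|
          ≤ ∑ i ∈ Finset.Icc 1 k, |r i * μ i| := Finset.abs_sum_le_sum_abs _ _
        _ ≤ ∑ i ∈ Finset.Icc 1 k, (a i - 2) * μ i := by
            apply Finset.sum_le_sum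
            intro i hi
            simp only [Finset.mem_Icc] at hi
            have h1 : 1 ≤ μ i := (key i hi.1).1
            rw [abs_mul, abs_of_pos (by linarith : (0:ℤ) < μ i)]
            exact mul_le_mul_of_nonneg_right (hr i) (by linarith)
    rcases Nat.eq_zero_or_pos k with hk0 | hk
    · subst hk0
      simp only [Finset.Icc_self, Finset.Icc_eq_empty_of_lt (by omega : (0:ℕ) < 1)] at *
      simpa using lt_of_le_of_lt (le_of_eq (by simp)) (by rw [hμ1]; norm_num :
        |(0:ℤ)| < μ 1)
    · have h1 := (key k hk).1
      have := ident k hk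
      linarith [habs, this]
  induction n with
  | zero => simp
  | succ m ih =>
    rw [Finset.sum_Icc_succ_top (by omega : 1 ≤ m + 1)] at hsum
    have hb := bound m
    have heq : |r (m + 1)| * μ (m + 1) < μ (m + 1) := by
      have : r (m + 1) * μ (m + 1) = -(∑ i ∈ Finset.Icc 1 m, r i * μ i) := by
        linarith
      calc |r (m + 1)| * μ (m + 1)
          = |r (m + 1) * μ (m + 1)| := by
            have hp : (0:ℤ) < μ (m + 1) := by
              linarith [(key (m + 1) (by omega)).1]
            rw [abs_mul, abs_of_pos hp]
        _ = |∑ i ∈ Finset.Icc 1 m, r i * μ i| := by rw [this, abs_neg]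
        _ < μ (m + 1) := hb
    have hμpos : 1 ≤ μ (m + 1) := (key (m + 1) (by omega)).1
    have habs0 : |r (m + 1)| = 0 := by nlinarith [abs_nonneg (r (m + 1))]
    have hr0 : r (m + 1) = 0 := abs_eq_zero.mp habs0
    have hsum' : ∑ i ∈ Finset.Icc 1 m, r i * μ i = 0 := by
      rw [hr0] at hsum; linarith
    intro i hi
    simp only [Finset.mem_Icc] at hi
    rcases Nat.eq_or_lt_of_le hi.2 with h | h
    · rw [h]; exact hr0
    · exact ih hsum' i (Finset.mem_Icc.mpr ⟨hi.1, by omega⟩)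
end

section
/- Let p = |D[n]| be the absolute value of the determinant D[n] of the n×n tridiagonal matrix with diagonal entries -a_i (a_i ≥ 2) and off-diagonal entries 1. Define μ_i by μ_1 = 1, μ_2 = a_1, μ_i = a_{i-1}μ_{i-1} - μ_{i-2}, and let r_i be integers with |r_i| ≤ a_i - 2. Then p > |Σ_{i=1}^{n} r_i μ_i|. Consequently, Σ_{i=1}^{n} r_i μ_i ≡ 0 (mod p) if and only if Σ_{i=1}^{n} r_i μ_i = 0. -/
private def nu (a : ℕ → ℤ) : ℕ → ℤ
  | 0 => 0
  | 1 => 1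
  | (i+2) => a (i+1) * nu a (i+1) - nu a i

private lemma nu_key (a : ℕ → ℤ) (ha : ∀ i, 2 ≤ a i) :
    ∀ i, 0 ≤ nu a i ∧ nu a i + 1 ≤ nu a (i+1) := by
  intro i
  induction i with
  | zero => simp [nu]
  | succ i ih =>
    obtain ⟨h0, h1⟩ := ih
    refine ⟨by linarith, ?_⟩
    have hrec : nu a (i+2) = a (i+1) * nu a (i+1) - nu a i := rfl
    have := ha (i+1)
    nlinarith

private lemma mu_eq_nu (a : ℕ → ℤ) (μ : ℕ → ℤ) (hμ1 : μ 1 = 1) (hμ2 : μ 2 = a 1)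
    (hμrec : ∀ i, 3 ≤ i → μ i = a (i - 1) * μ (i - 1) - μ (i - 2)) :
    ∀ i, μ (i+1) = nu a (i+1) ∧ μ (i+2) = nu a (i+2) := by
  intro i
  induction i with
  | zero =>
    refine ⟨by simpa [nu] using hμ1, ?_⟩
    show μ 2 = a 1 * nu a 1 - nu a 0
    simp [nu, hμ2]
  | succ i ih =>
    obtain ⟨h1, h2⟩ := ih
    refine ⟨h2, ?_⟩
    have := hμrec (i+3) (by omega)
    simp only [show i+3-1 = i+2 from rfl, show i+3-2 = i+1 from rfl] at this
    rw [this, h1, h2]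
    rfl

private lemma E_eq_nu (a : ℕ → ℤ) (E : ℕ → ℤ) (hE0 : E 0 = 0) (hE1 : E 1 = 1)
    (hErec : ∀ i, E (i + 2) = -a (i + 1) * E (i + 1) - E i) :
    ∀ i, E i = (-1)^(i+1) * nu a i ∧ E (i+1) = (-1)^(i+2) * nu a (i+1) := by
  intro i
  induction i with
  | zero => constructor <;> simp [nu, hE0, hE1]
  | succ i ih =>
    obtain ⟨h1, h2⟩ := ih
    refine ⟨h2, ?_⟩
    rw [hErec i, h1, h2]
    have : nu a (i+2) = a (i+1) * nu a (i+1) - nu a i := rfl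
    rw [this]
    ring

private lemma nu_sum (a : ℕ → ℤ) :
    ∀ n, ∑ i ∈ Finset.Icc 1 n, (a i - 2) * nu a i = nu a (n+1) - nu a n - 1 := by
  intro n
  induction n with
  | zero => simp [nu]
  | succ n ih =>
    rw [Finset.sum_Icc_succ_top (by omega), ih]
    have : nu a (n+2) = a (n+1) * nu a (n+1) - nu a n := rfl
    rw [this]
    ring

theorem stmt7 (a : ℕ → ℤ) (ha : ∀ i, 2 ≤ a i)
    (E : ℕ → ℤ) (hE0 : E 0 = 0) (hE1 : E 1 = 1)
    (hErec : ∀ i, E (i + 2) = -a (i + 1) * E (i + 1) - E i)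
    (μ : ℕ → ℤ) (hμ1 : μ 1 = 1) (hμ2 : μ 2 = a 1)
    (hμrec : ∀ i, 3 ≤ i → μ i = a (i - 1) * μ (i - 1) - μ (i - 2))
    (r : ℕ → ℤ) (hr : ∀ i, |r i| ≤ a i - 2)
    (n : ℕ) (p : ℤ) (hp : p = |E (n + 1)|) :
    |∑ i ∈ Finset.Icc 1 n, r i * μ i| < p ∧
      (p ∣ ∑ i ∈ Finset.Icc 1 n, r i * μ i ↔ ∑ i ∈ Finset.Icc 1 n, r i * μ i = 0) := by
  have hp' : p = nu a (n+1) := by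
    rw [hp, (E_eq_nu a E hE0 hE1 hErec (n+1)).1, abs_mul, abs_pow, abs_neg, abs_one, one_pow,
      one_mul, abs_of_nonneg (nu_key a ha (n+1)).1]
  have hsum : ∑ i ∈ Finset.Icc 1 n, r i * μ i = ∑ i ∈ Finset.Icc 1 n, r i * nu a i := by
    apply Finset.sum_congr rfl
    intro i hi
    simp only [Finset.mem_Icc] at hi
    obtain ⟨h1, _⟩ := hi
    obtain ⟨j, rfl⟩ : ∃ j, i = j + 1 := ⟨i - 1, by omega⟩
    rw [(mu_eq_nu a μ hμ1 hμ2 hμrec j).1]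
  have hlt : |∑ i ∈ Finset.Icc 1 n, r i * μ i| < p := by
    rw [hsum, hp']
    calc |∑ i ∈ Finset.Icc 1 n, r i * nu a i|
        ≤ ∑ i ∈ Finset.Icc 1 n, |r i * nu a i| := Finset.abs_sum_le_sum_abs _ _
      _ ≤ ∑ i ∈ Finset.Icc 1 n, (a i - 2) * nu a i := by
          apply Finset.sum_le_sum
          intro i _
          rw [abs_mul, abs_of_nonneg (nu_key a ha i).1]
          exact mul_le_mul_of_nonneg_right (hr i) (nu_key a ha i).1
      _ = nu a (n+1) - nu a n - 1 := nu_sum a n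
      _ < nu a (n+1) := by have := (nu_key a ha n).1; linarith
  refine ⟨hlt, ⟨fun hd => ?_, fun h0 => h0 ▸ dvd_zero p⟩⟩
  exact Int.eq_zero_of_abs_lt_dvd hd hlt
end

section
/- Let x_1, x_2 be positive integers with x_1 x_2 > 1, and let M be the 2×2 integer matrix [[2x_1, -1], [-1, 2x_2]]. There is no 2×2 integer matrix A with |det(A)| = 1, trace(A) = -1, and A M A^T = M. -/
open Matrix

theorem stmt8 (x₁ x₂ : ℤ) (hx₁ : 1 ≤ x₁) (hx₂ : 1 ≤ x₂) (hprod : 1 < x₁ * x₂)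
    (M : Matrix (Fin 2) (Fin 2) ℤ) (hM : M = !![2 * x₁, -1; -1, 2 * x₂]) :
    ¬ ∃ A : Matrix (Fin 2) (Fin 2) ℤ,
      |A.det| = 1 ∧ A.trace = -1 ∧ A * M * Aᵀ = M := by
  subst hM
  rintro ⟨A, hdet, htr, hAM⟩
  set a := A 0 0 with ha
  set b := A 0 1 with hb
  set c := A 1 0 with hc
  set d := A 1 1 with hd
  have hdet2 : A.det = a * d - b * c := Matrix.det_fin_two A
  have htr2 : a + d = -1 := by rw [Matrix.trace_fin_two] at htr; exact htr
  -- key matrix identity: det A • (A * M) = M * adjugate Aᵀ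
  have key : A.det • (A * !![2 * x₁, -1; -1, 2 * x₂]) =
      !![2 * x₁, -1; -1, 2 * x₂] * (Aᵀ).adjugate := by
    have h1 : (A * !![2 * x₁, -1; -1, 2 * x₂] * Aᵀ) * (Aᵀ).adjugate =
        !![2 * x₁, -1; -1, 2 * x₂] * (Aᵀ).adjugate := by rw [hAM]
    rw [mul_assoc, Matrix.mul_adjugate, Matrix.det_transpose, Matrix.mul_smul, mul_one] at h1
    exact h1
  have k00 := congr_fun (congr_fun key 0) 0
  have k11 := congr_fun (congr_fun key 1) 1
  simp [Matrix.smul_apply, Matrix.mul_apply, Fin.sum_univ_two, Matrix.adjugate_fin_two,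
    ← ha, ← hb, ← hc, ← hd] at k00 k11
  -- k00 : A.det * (a * (2*x₁) + b * (-1)) = 2*x₁ * d + (-1) * (-b)  (approximately)
  have habs := abs_eq (by norm_num : (0:ℤ) ≤ 1) |>.mp hdet
  rcases habs with h1 | h1 <;> rw [h1] at k00 k11
  · -- det = 1
    have hb' : 2 * b = 2 * x₁ * (2 * a + 1) := by linear_combination -k00 - 2 * x₁ * htr2
    have hc' : 2 * c = -(2 * x₂ * (2 * a + 1)) := by linear_combination -k11 + 2 * x₂ * htr2
    have hdet3 : a * d - b * c = 1 := by rw [← hdet2, h1]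
    have key2 : (2 * a + 1) ^ 2 * (4 * x₁ * x₂ - 1) = 3 := by
      linear_combination (2 * c) * hb' + (2 * x₁ * (2 * a + 1)) * hc' + 4 * hdet3 +
        (-4 * a) * htr2
    have hsq : 1 ≤ (2 * a + 1) ^ 2 := by
      rcases le_or_gt 0 a with h | h
      · nlinarith
      · nlinarith
    have h7 : 7 ≤ 4 * x₁ * x₂ - 1 := by linarith
    nlinarith [key2, hsq, h7]
  · -- det = -1
    have : 2 * x₁ = 0 := by linear_combination k00 + 2 * x₁ * htr2
    omega
end

section
/- Let M be the n×n tridiagonal matrix with diagonal entries 2x_1, ..., 2x_n (each 2x_i ≥ 3, i.e. x_i ≥ 2) and off-diagonal entries -1, and suppose x_i ≠ x_{n+1-i} for some i. If A is an integer matrix with A M A^T = M, then trace(A) ≠ -1. (Indeed A = ±Id, so trace(A) = ±n.) -/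
/-!
Extend `v : Fin n → ℤ` by zero to `u : ℕ → ℤ`. For `M = diagonal d - adjMatrix (pathGraph n)`,
`v ⬝ᵥ M *ᵥ v = ∑ (d i - 2) v i ^ 2 + u 0 ^ 2 + ∑ (u (k + 1) - u k) ^ 2`, and telescoping `u` from
both ends bounds the last two terms below by `2 |v j|` for every `j`. So when every `d i ≥ 3`, the
form is at least `d j` whenever `v j ≠ 0`, with equality only at `v = ± e j`. Applied to the rows of
an integral isometry `A` and of `A⁻¹` (integral, as `det A = ±1`), this makes `A` a signed
permutation matrix. Matching the off-diagonal entries, the permutation is an automorphism of the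
path and the signs agree along its edges. A path has only two automorphisms, the identity and the
reversal, and the reversal would make `d` palindromic; so `A = ±1` and `trace A = ±n`.
-/

open Matrix Finset SimpleGraph

theorem sq_add_sum_range_sub_sq {R : Type*} [CommRing R] (u : ℕ → R) (N : ℕ) :
    u 0 ^ 2 + ∑ k ∈ range N, (u (k + 1) - u k) ^ 2
      = 2 * ∑ k ∈ range N, (u k ^ 2 - u k * u (k + 1)) + u N ^ 2 := by
  induction N with
  | zero => simp
  | succ N ih => rw [sum_range_succ, sum_range_succ, ← add_assoc, ih]; ring

theorem two_mul_abs_le_sq_add_sum_range_sub_sq (u : ℕ → ℤ) {N j : ℕ} (hN : u N = 0)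
    (hj : j ≤ N) : 2 * |u j| ≤ u 0 ^ 2 + ∑ k ∈ range N, (u (k + 1) - u k) ^ 2 := by
  have abs_le_sq : ∀ t : ℤ, |t| ≤ t ^ 2 := fun t => by simpa using Int.natAbs_le_self_sq t
  have hleft : u j - u 0 = ∑ k ∈ range j, (u (k + 1) - u k) := (sum_range_sub u j).symm
  have hright : -u j = ∑ k ∈ Ico j N, (u (k + 1) - u k) := by
    rw [sum_Ico_eq_sub _ hj, sum_range_sub, sum_range_sub, hN]; ring
  have hsplit := sum_range_add_sum_Ico (fun k => |u (k + 1) - u k|) hj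
  have hleft_le := abs_sum_le_sum_abs (fun k => u (k + 1) - u k) (range j)
  have hright_le := abs_sum_le_sum_abs (fun k => u (k + 1) - u k) (Ico j N)
  rw [← hleft] at hleft_le
  rw [← hright, abs_neg] at hright_le
  have habs_le_sq : ∑ k ∈ range N, |u (k + 1) - u k| ≤ ∑ k ∈ range N, (u (k + 1) - u k) ^ 2 :=
    sum_le_sum fun k _ => abs_le_sq _
  linarith [abs_sub_abs_le_abs_sub (u j) (u 0), abs_le_sq (u 0)]

theorem eq_add_mul_of_unit_steps (f : ℕ → ℤ) {N : ℕ}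
    (hstep : ∀ k, k + 1 < N → f (k + 1) - f k = 1 ∨ f (k + 1) - f k = -1)
    (hinj : ∀ k, k + 2 < N → f (k + 2) ≠ f k) :
    ∀ k < N, f k = f 0 + k * (f 1 - f 0) := by
  have hconst : ∀ k, k + 1 < N → f (k + 1) - f k = f 1 - f 0 := by
    intro k
    induction k with
    | zero => intro _; rfl
    | succ k ih =>
      intro hk
      have hprev := ih (by omega)
      have hne : f (k + 1 + 1) ≠ f k := hinj k hk
      rcases hstep k (by omega) with h | h <;> rcases hstep (k + 1) hk with h' | h' <;> omega
  intro k
  induction k with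
  | zero => intro _; simp
  | succ k ih =>
    intro hk
    push_cast
    linear_combination ih (by omega) + hconst k hk

def zeroExtend {n : ℕ} (v : Fin n → ℤ) (k : ℕ) : ℤ := if h : k < n then v ⟨k, h⟩ else 0

@[simp] theorem zeroExtend_val {n : ℕ} (v : Fin n → ℤ) (i : Fin n) : zeroExtend v i = v i := by
  simp [zeroExtend]

theorem zeroExtend_of_le {n : ℕ} (v : Fin n → ℤ) {k : ℕ} (h : n ≤ k) : zeroExtend v k = 0 := by
  simp [zeroExtend, not_lt.2 h]

theorem sum_ite_val_add_one_eq_zeroExtend {n : ℕ} (v : Fin n → ℤ) (i : Fin n) :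
    ∑ j : Fin n, (if (i : ℕ) + 1 = j then v j else 0) = zeroExtend v (i + 1) := by
  have := Fin.sum_univ_eq_sum_range (fun k => if (i : ℕ) + 1 = k then zeroExtend v k else 0) n
  simp only [zeroExtend_val] at this
  rw [this, sum_ite_eq]
  split_ifs with h
  · rfl
  · rw [zeroExtend_of_le v (by simpa using h)]

theorem SimpleGraph.Preconnected.apply_eq_of_adj {V α : Type*} {G : SimpleGraph V}
    (hG : G.Preconnected) {f : V → α} (h : ∀ u v, G.Adj u v → f u = f v) (u v : V) :
    f u = f v := by
  obtain ⟨p⟩ := hG u v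
  induction p with
  | nil => rfl
  | cons hadj _ ih => exact (h _ _ hadj).trans ih

theorem eq_id_or_eq_rev_of_injective_of_pathGraph_adj {n : ℕ} {σ : Fin n → Fin n}
    (hσ : Function.Injective σ)
    (hadj : ∀ i j, (pathGraph n).Adj i j → (pathGraph n).Adj (σ i) (σ j)) :
    σ = id ∨ σ = Fin.rev := by
  rcases lt_or_ge n 2 with hn | hn
  · left; funext i; ext; have := (σ i).isLt; have := i.isLt; simp only [id]; omega
  obtain ⟨f, hf⟩ : ∃ f : ℕ → ℤ, ∀ k (hk : k < n), f k = σ ⟨k, hk⟩ :=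
    ⟨zeroExtend fun i => ((σ i : ℕ) : ℤ), fun k hk => zeroExtend_val _ ⟨k, hk⟩⟩
  have hstep : ∀ k, k + 1 < n → f (k + 1) - f k = 1 ∨ f (k + 1) - f k = -1 := fun k hk => by
    have := pathGraph_adj.1 (hadj ⟨k, by omega⟩ ⟨k + 1, hk⟩ (pathGraph_adj.2 (Or.inl rfl)))
    rw [hf k (by omega), hf (k + 1) hk]; omega
  have hAP := eq_add_mul_of_unit_steps f hstep fun k hk heq => by
    rw [hf k (by omega), hf (k + 2) hk, Nat.cast_inj, Fin.val_inj] at heq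
    simpa using hσ heq
  have hval : ∀ i : Fin n, f i = σ i := fun i => hf i i.isLt
  have hfirst := hf 0 (by omega)
  have hlast := hf (n - 1) (by omega)
  have := (σ ⟨0, by omega⟩).isLt
  have := (σ ⟨n - 1, by omega⟩).isLt
  rcases hstep 0 (by omega) with hd | hd <;> rw [zero_add] at hd <;>
    simp only [hd, mul_one, mul_neg, ← sub_eq_add_neg] at hAP
  · left; funext i; ext
    have := hAP (n - 1) (by omega)
    have := hAP i i.isLt
    rw [hval i] at this
    simp only [id]; omega
  · right; funext i; ext
    have := hAP (n - 1) (by omega)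
    have := hAP i i.isLt
    rw [hval i] at this
    simp only [Fin.val_rev]; omega

section IntegralIsometry

variable {ι R : Type*} [Fintype ι] [CommRing R] {M A : Matrix ι ι R}

theorem dotProduct_mulVec_eq_of_mul_mul_transpose_eq (hA : A * M * Aᵀ = M) (i j : ι) :
    A i ⬝ᵥ (M *ᵥ A j) = M i j := by
  have h := mul_mul_apply A M Aᵀ i j
  rwa [transpose_transpose, hA, eq_comm] at h

variable [DecidableEq ι]

theorem mul_mul_transpose_apply_of_eq_single {σ : ι → ι} {ε : ι → R}
    (hσ : ∀ i, A i = Pi.single (σ i) (ε i)) (i j : ι) :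
    (A * M * Aᵀ) i j = ε i * ε j * M (σ i) (σ j) := by
  rw [mul_mul_apply, transpose_transpose, hσ i, hσ j, mulVec_single, single_dotProduct]
  simp only [Pi.smul_apply, col_apply, op_smul_eq_mul]
  ring

theorem isUnit_det_of_mul_mul_transpose_eq [IsDomain R] (hM : M.det ≠ 0)
    (hA : A * M * Aᵀ = M) : IsUnit A.det := by
  have h := congrArg det hA
  rw [det_mul, det_mul, det_transpose] at h
  refine IsUnit.of_mul_eq_one A.det (mul_right_cancel₀ hM ?_)
  linear_combination h

theorem nonsing_inv_mul_mul_transpose_eq (hA : A * M * Aᵀ = M) (hdet : IsUnit A.det) :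
    A⁻¹ * M * A⁻¹ᵀ = M := by
  calc A⁻¹ * M * A⁻¹ᵀ = A⁻¹ * (A * M * Aᵀ) * A⁻¹ᵀ := by rw [hA]
    _ = (A⁻¹ * A) * M * (A⁻¹ * A)ᵀ := by simp only [transpose_mul, Matrix.mul_assoc]
    _ = M := by rw [nonsing_inv_mul A hdet, transpose_one, Matrix.one_mul, Matrix.mul_one]

variable [PartialOrder R]

theorem exists_eq_single_of_mul_mul_transpose_eq [Nontrivial R]
    (hmin : ∀ (v : ι → R) j, v j ≠ 0 → M j j ≤ v ⬝ᵥ (M *ᵥ v))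
    (hrigid : ∀ (v : ι → R) j, v j ≠ 0 → v ⬝ᵥ (M *ᵥ v) = M j j → v = Pi.single j (v j))
    {B : Matrix ι ι R} (hA : A * M * Aᵀ = M) (hB : B * M * Bᵀ = M) (hAB : A * B = 1) (i : ι) :
    ∃ k, IsUnit (A i k) ∧ A i = Pi.single k (A i k) := by
  obtain ⟨k, -, hk⟩ : ∃ k ∈ univ, A i k * B k i ≠ 0 := by
    refine exists_ne_zero_of_sum_ne_zero ?_
    rw [← mul_apply, hAB, one_apply_eq]
    exact one_ne_zero
  have hAik : A i k ≠ 0 := left_ne_zero_of_mul hk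
  have hBki : B k i ≠ 0 := right_ne_zero_of_mul hk
  have hQA := dotProduct_mulVec_eq_of_mul_mul_transpose_eq hA i i
  have hQB := dotProduct_mulVec_eq_of_mul_mul_transpose_eq hB k k
  have hki : M k k ≤ M i i := hQA ▸ hmin (A i) k hAik
  have hik : M i i ≤ M k k := hQB ▸ hmin (B k) i hBki
  have hsingle := hrigid (A i) k hAik (by rw [hQA]; exact le_antisymm hik hki)
  refine ⟨k, IsUnit.of_mul_eq_one (B k i) ?_, hsingle⟩
  have h := congrFun (congrFun hAB i) i
  rwa [mul_apply, one_apply_eq, ← dotProduct, hsingle, single_dotProduct] at h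

theorem exists_signed_perm_of_mul_mul_transpose_eq [IsDomain R]
    (hmin : ∀ (v : ι → R) j, v j ≠ 0 → M j j ≤ v ⬝ᵥ (M *ᵥ v))
    (hrigid : ∀ (v : ι → R) j, v j ≠ 0 → v ⬝ᵥ (M *ᵥ v) = M j j → v = Pi.single j (v j))
    (hM : M.det ≠ 0) (hA : A * M * Aᵀ = M) :
    ∃ (σ : ι → ι) (ε : ι → R), (∀ i, IsUnit (ε i)) ∧ ∀ i, A i = Pi.single (σ i) (ε i) := by
  have hdet := isUnit_det_of_mul_mul_transpose_eq hM hA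
  choose σ hunit hσ using exists_eq_single_of_mul_mul_transpose_eq hmin hrigid hA
    (nonsing_inv_mul_mul_transpose_eq hA hdet) (mul_nonsing_inv A hdet)
  exact ⟨σ, fun i => A i (σ i), hunit, hσ⟩

end IntegralIsometry

section PathMatrix

instance (n : ℕ) : DecidableRel (pathGraph n).Adj := fun _ _ => decidable_of_iff' _ pathGraph_adj

variable {n : ℕ}

def pathMatrix (d : Fin n → ℤ) : Matrix (Fin n) (Fin n) ℤ :=
  diagonal d - (pathGraph n).adjMatrix ℤ

theorem pathMatrix_apply_self (d : Fin n → ℤ) (i : Fin n) : pathMatrix d i i = d i := by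
  simp [pathMatrix]

theorem pathMatrix_apply_of_ne (d : Fin n → ℤ) {i j : Fin n} (h : i ≠ j) :
    pathMatrix d i j = if (pathGraph n).Adj i j then -1 else 0 := by
  simp only [pathMatrix, Matrix.sub_apply, diagonal_apply_ne _ h, adjMatrix_apply]
  split_ifs <;> simp

theorem dotProduct_adjMatrix_pathGraph_mulVec (v : Fin n → ℤ) :
    v ⬝ᵥ ((pathGraph n).adjMatrix ℤ *ᵥ v)
      = 2 * ∑ k ∈ range n, zeroExtend v k * zeroExtend v (k + 1) := by
  have hadj : ∀ i j : Fin n, (pathGraph n).adjMatrix ℤ i j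
      = (if (i : ℕ) + 1 = j then 1 else 0) + (if (j : ℕ) + 1 = i then 1 else 0) := by
    intro i j
    simp only [adjMatrix_apply, pathGraph_adj]
    split_ifs <;> omega
  have hsucc : ∑ i : Fin n, v i * ∑ j : Fin n, (if (i : ℕ) + 1 = j then v j else 0)
      = ∑ k ∈ range n, zeroExtend v k * zeroExtend v (k + 1) := by
    simp_rw [sum_ite_val_add_one_eq_zeroExtend, ← zeroExtend_val v]
    exact Fin.sum_univ_eq_sum_range (fun k => zeroExtend v k * zeroExtend v (k + 1)) n
  have hpred : ∑ i : Fin n, v i * ∑ j : Fin n, (if (j : ℕ) + 1 = i then v j else 0)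
      = ∑ i : Fin n, v i * ∑ j : Fin n, (if (i : ℕ) + 1 = j then v j else 0) := by
    simp_rw [mul_sum]
    rw [sum_comm]
    refine sum_congr rfl fun i _ => sum_congr rfl fun j _ => ?_
    split_ifs <;> ring
  simp only [dotProduct, mulVec, hadj, add_mul, ite_mul, one_mul, zero_mul, sum_add_distrib,
    mul_add]
  rw [hpred, hsucc]; ring

theorem dotProduct_pathMatrix_mulVec (d v : Fin n → ℤ) :
    v ⬝ᵥ (pathMatrix d *ᵥ v) = ∑ i, (d i - 2) * v i ^ 2
      + (zeroExtend v 0 ^ 2 + ∑ k ∈ range n, (zeroExtend v (k + 1) - zeroExtend v k) ^ 2) := by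
  have hsq : ∑ k ∈ range n, zeroExtend v k ^ 2 = ∑ i, v i ^ 2 := by
    rw [← Fin.sum_univ_eq_sum_range]; simp
  have hdiag : v ⬝ᵥ (diagonal d *ᵥ v) = ∑ i, (d i - 2) * v i ^ 2 + 2 * ∑ i, v i ^ 2 := by
    simp only [dotProduct, mulVec_diagonal]
    rw [mul_sum, ← sum_add_distrib]
    exact sum_congr rfl fun i _ => by ring
  rw [pathMatrix, sub_mulVec, dotProduct_sub, hdiag, dotProduct_adjMatrix_pathGraph_mulVec,
    sq_add_sum_range_sub_sq, zeroExtend_of_le v le_rfl, sum_sub_distrib, hsq]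
  ring

theorem sum_add_two_le_dotProduct_pathMatrix_mulVec (d : Fin n → ℤ) {v : Fin n → ℤ}
    {j : Fin n} (hvj : v j ≠ 0) : ∑ i, (d i - 2) * v i ^ 2 + 2 ≤ v ⬝ᵥ (pathMatrix d *ᵥ v) := by
  have henergy := two_mul_abs_le_sq_add_sum_range_sub_sq (zeroExtend v)
    (zeroExtend_of_le v le_rfl) j.isLt.le
  rw [zeroExtend_val] at henergy
  rw [dotProduct_pathMatrix_mulVec]
  linarith [Int.one_le_abs hvj]

variable {d : Fin n → ℤ}

theorem le_dotProduct_pathMatrix_mulVec (hd : ∀ i, 3 ≤ d i) {v : Fin n → ℤ} {j : Fin n}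
    (hvj : v j ≠ 0) : pathMatrix d j j ≤ v ⬝ᵥ (pathMatrix d *ᵥ v) := by
  have hj : (d j - 2) * v j ^ 2 ≤ ∑ i, (d i - 2) * v i ^ 2 :=
    single_le_sum (f := fun i => (d i - 2) * v i ^ 2)
      (fun i _ => mul_nonneg (by linarith [hd i]) (sq_nonneg _)) (mem_univ j)
  have := sum_add_two_le_dotProduct_pathMatrix_mulVec d hvj
  rw [pathMatrix_apply_self]
  nlinarith [hd j, (one_le_sq_iff_one_le_abs _).2 (Int.one_le_abs hvj)]

theorem eq_single_of_dotProduct_pathMatrix_mulVec_eq (hd : ∀ i, 3 ≤ d i) {v : Fin n → ℤ}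
    {j : Fin n} (hvj : v j ≠ 0) (hQ : v ⬝ᵥ (pathMatrix d *ᵥ v) = pathMatrix d j j) :
    v = Pi.single j (v j) := by
  funext k
  by_cases hkj : k = j
  · subst hkj; simp
  rw [Pi.single_eq_of_ne hkj]
  by_contra hvk
  have hjk : (d j - 2) * v j ^ 2 + (d k - 2) * v k ^ 2 ≤ ∑ i, (d i - 2) * v i ^ 2 := by
    rw [← sum_pair (f := fun i => (d i - 2) * v i ^ 2) (Ne.symm hkj)]
    exact sum_le_sum_of_subset_of_nonneg (subset_univ _)
      fun i _ _ => mul_nonneg (by linarith [hd i]) (sq_nonneg _)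
  have := sum_add_two_le_dotProduct_pathMatrix_mulVec d hvj
  rw [pathMatrix_apply_self] at hQ
  nlinarith [hd j, hd k, (one_le_sq_iff_one_le_abs _).2 (Int.one_le_abs hvj),
    (one_le_sq_iff_one_le_abs _).2 (Int.one_le_abs hvk)]

theorem det_pathMatrix_ne_zero (hd : ∀ i, 3 ≤ d i) : (pathMatrix d).det ≠ 0 := by
  intro h
  obtain ⟨v, hv, hMv⟩ := exists_mulVec_eq_zero_iff.2 h
  obtain ⟨j, hj⟩ := Function.ne_iff.1 hv
  have := le_dotProduct_pathMatrix_mulVec hd hj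
  rw [hMv, dotProduct_zero, pathMatrix_apply_self] at this
  linarith [hd j]

variable {σ : Fin n → Fin n} {ε : Fin n → ℤ} (hε : ∀ i, IsUnit (ε i))
  (hcross : ∀ i j, ε i * ε j * pathMatrix d (σ i) (σ j) = pathMatrix d i j)
include hε hcross

theorem apply_self_of_signed_perm_pathMatrix (i : Fin n) : d (σ i) = d i := by
  have h := hcross i i
  rwa [pathMatrix_apply_self, pathMatrix_apply_self, ← sq, Int.isUnit_sq (hε i), one_mul] at h

theorem injective_of_signed_perm_pathMatrix (hd : ∀ i, 3 ≤ d i) : Function.Injective σ := by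
  intro i j hij
  by_contra hne
  have h := hcross i j
  rw [hij, pathMatrix_apply_self, pathMatrix_apply_of_ne d hne] at h
  have := hd (σ j)
  rcases Int.isUnit_iff.1 ((hε i).mul (hε j)) with hs | hs <;> rw [hs] at h <;>
    split_ifs at h <;> omega

theorem adj_and_eq_of_signed_perm_pathMatrix (hd : ∀ i, 3 ≤ d i) {i j : Fin n}
    (hij : (pathGraph n).Adj i j) : (pathGraph n).Adj (σ i) (σ j) ∧ ε i = ε j := by
  have hne := (injective_of_signed_perm_pathMatrix hε hcross hd).ne hij.ne
  have h := hcross i j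
  rw [pathMatrix_apply_of_ne d hne, pathMatrix_apply_of_ne d hij.ne, if_pos hij] at h
  split_ifs at h with hadj
  · refine ⟨hadj, ?_⟩
    rcases Int.isUnit_iff.1 (hε i) with hi | hi <;> rcases Int.isUnit_iff.1 (hε j) with hj | hj <;>
      rw [hi, hj] at h ⊢ <;> norm_num at h
  · simp at h

end PathMatrix

theorem eq_one_or_eq_neg_one_of_mul_mul_transpose_pathMatrix {n : ℕ} {d : Fin n → ℤ}
    (hd : ∀ i, 3 ≤ d i) (hpal : ∃ i, d i ≠ d i.rev) {A : Matrix (Fin n) (Fin n) ℤ}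
    (hA : A * pathMatrix d * Aᵀ = pathMatrix d) : A = 1 ∨ A = -1 := by
  obtain ⟨σ, ε, hε, hσ⟩ := exists_signed_perm_of_mul_mul_transpose_eq
    (fun _ _ => le_dotProduct_pathMatrix_mulVec hd)
    (fun _ _ => eq_single_of_dotProduct_pathMatrix_mulVec_eq hd) (det_pathMatrix_ne_zero hd) hA
  have hcross : ∀ i j, ε i * ε j * pathMatrix d (σ i) (σ j) = pathMatrix d i j := fun i j => by
    rw [← mul_mul_transpose_apply_of_eq_single hσ, hA]
  have hσid : σ = id := by
    refine (eq_id_or_eq_rev_of_injective_of_pathGraph_adj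
      (injective_of_signed_perm_pathMatrix hε hcross hd)
      fun _ _ h => (adj_and_eq_of_signed_perm_pathMatrix hε hcross hd h).1).resolve_right ?_
    rintro rfl
    obtain ⟨i, hi⟩ := hpal
    exact hi (apply_self_of_signed_perm_pathMatrix hε hcross i).symm
  obtain ⟨i₀, -⟩ := hpal
  have hconst : ∀ i, ε i = ε i₀ := fun i => (pathGraph_preconnected n).apply_eq_of_adj
    (fun _ _ h => (adj_and_eq_of_signed_perm_pathMatrix hε hcross hd h).2) i i₀
  have hAε : A = ε i₀ • 1 := by
    ext i j
    rw [hσ i, hσid, hconst, Matrix.smul_apply, one_apply, Pi.single_apply, id, smul_eq_mul]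
    simp [eq_comm]
  rcases Int.isUnit_iff.1 (hε i₀) with h | h <;> rw [hAε, h] <;> simp

theorem stmt9 (n : ℕ) (hn : 2 ≤ n) (x : Fin n → ℤ) (hx : ∀ i, 2 ≤ x i)
    (M : Matrix (Fin n) (Fin n) ℤ)
    (hM : ∀ i j, M i j =
      if i = j then 2 * x i
      else if (i : ℕ) + 1 = (j : ℕ) ∨ (j : ℕ) + 1 = (i : ℕ) then -1 else 0)
    (hnonpal : ∃ i : Fin n, x i ≠ x i.rev) :
    ∀ A : Matrix (Fin n) (Fin n) ℤ, A * M * Aᵀ = M → A.trace ≠ -1 := by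
  intro A hA
  have hMpath : M = pathMatrix fun i => 2 * x i := by
    ext i j
    rw [hM]
    split_ifs with hij hadj
    · rw [hij, pathMatrix_apply_self]
    · rw [pathMatrix_apply_of_ne _ hij, if_pos (pathGraph_adj.2 hadj)]
    · rw [pathMatrix_apply_of_ne _ hij, if_neg (mt pathGraph_adj.1 hadj)]
  subst hMpath
  obtain ⟨i, hi⟩ := hnonpal
  rcases eq_one_or_eq_neg_one_of_mul_mul_transpose_pathMatrix (fun i => by linarith [hx i])
    ⟨i, fun h => hi (by linarith)⟩ hA with rfl | rfl
  · rw [trace_one, Fintype.card_fin]; omega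
  · rw [trace_neg, trace_one, Fintype.card_fin]; omega
end

section
/- Let Q be an n×n tridiagonal integer matrix with Q_{ii} = -v_i where v_i ≥ 2, Q_{i,i+1} = Q_{i+1,i} = 1, and other entries zero. If x ∈ ℤ^n satisfies Qx ≥ 0 componentwise and Qx ≠ 0, then x_i < 0 for every i. -/
open Matrix

theorem stmt12 (n : ℕ) (v : Fin n → ℤ) (hv : ∀ i, 2 ≤ v i)
    (Q : Matrix (Fin n) (Fin n) ℤ)
    (hQ : ∀ i j, Q i j =
      if i = j then -(v i)
      else if (i : ℕ) + 1 = (j : ℕ) ∨ (j : ℕ) + 1 = (i : ℕ) then 1 else 0)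
    (x : Fin n → ℤ) (hpos : ∀ i, 0 ≤ Q.mulVec x i) (hne : Q.mulVec x ≠ 0) :
    ∀ i, x i < 0 := by
  have key : ∀ k : Fin n, Q.mulVec x k =
      -(v k) * x k
      + (if h : (k:ℕ)+1 < n then x ⟨(k:ℕ)+1, h⟩ else 0)
      + (if h : 0 < (k:ℕ) then x ⟨(k:ℕ)-1, by omega⟩ else 0) := by
    intro k
    have hsplit : ∀ j : Fin n, Q k j * x j =
        (if j = k then -(v k) * x k else 0)
      + (if (k:ℕ)+1 = (j:ℕ) then x j else 0)
      + (if (j:ℕ)+1 = (k:ℕ) then x j else 0) := by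
      intro j
      rw [hQ]
      rcases eq_or_ne j k with h | h
      · subst h
        rw [if_pos rfl, if_pos rfl, if_neg (show ¬((j:ℕ)+1 = (j:ℕ)) by omega)]
        ring
      · rw [if_neg (fun hh => h hh.symm), if_neg h]
        rcases eq_or_ne ((k:ℕ)+1) (j:ℕ) with h1 | h1
        · rw [if_pos (Or.inl h1), if_pos h1, if_neg (by omega)]; ring
        · rcases eq_or_ne ((j:ℕ)+1) (k:ℕ) with h2 | h2
          · rw [if_pos (Or.inr h2), if_neg h1, if_pos h2]; ring
          · rw [if_neg (by tauto), if_neg h1, if_neg h2]; ring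
    unfold mulVec dotProduct
    rw [Finset.sum_congr rfl (fun j _ => hsplit j)]
    rw [Finset.sum_add_distrib, Finset.sum_add_distrib]
    congr 1
    congr 1
    · simp
    · by_cases h : (k:ℕ)+1 < n
      · rw [dif_pos h]
        rw [Finset.sum_eq_single (⟨(k:ℕ)+1, h⟩ : Fin n)]
        · simp
        · intro j _ hj
          rw [if_neg (fun hh => hj (Fin.ext hh.symm))]
        · simp
      · rw [dif_neg h]
        apply Finset.sum_eq_zero
        intro j _
        rw [if_neg]
        intro hh
        exact h (by have := j.isLt; omega)
    · by_cases h : 0 < (k:ℕ)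
      · rw [dif_pos h]
        rw [Finset.sum_eq_single (⟨(k:ℕ)-1, by omega⟩ : Fin n)]
        · rw [if_pos (by simp; omega)]
        · intro j _ hj
          rw [if_neg (fun hh => hj (Fin.ext (by simp; omega)))]
        · simp
      · rw [dif_neg h]
        apply Finset.sum_eq_zero
        intro j _
        rw [if_neg (by omega)]
  intro i0
  by_contra hcon
  push_neg at hcon
  have hn : 0 < n := i0.pos
  have hne' : (Finset.univ : Finset (Fin n)).Nonempty := ⟨i0, Finset.mem_univ i0⟩
  set M := Finset.univ.sup' hne' x with hMdef
  have hle : ∀ j, x j ≤ M := fun j => Finset.le_sup' x (Finset.mem_univ j)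
  have hM0 : 0 ≤ M := le_trans hcon (hle i0)
  obtain ⟨j0, -, hj0⟩ := Finset.exists_mem_eq_sup' hne' x
  have hvM : ∀ k : Fin n, 2 * M ≤ v k * M := fun k => by nlinarith [hv k, hM0]
  -- generic bounds on the dite terms
  have hLle : ∀ k : Fin n,
      (if h : 0 < (k:ℕ) then x ⟨(k:ℕ)-1, by omega⟩ else 0) ≤ M := by
    intro k; split
    · exact hle _
    · exact hM0
  have hRle : ∀ k : Fin n,
      (if h : (k:ℕ)+1 < n then x ⟨(k:ℕ)+1, h⟩ else 0) ≤ M := by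
    intro k; split
    · exact hle _
    · exact hM0
  -- rightward propagation at the max level
  have stepM : ∀ k : Fin n, x k = M → ∀ h : (k:ℕ)+1 < n, x ⟨(k:ℕ)+1, h⟩ = M := by
    intro k hk h
    have h1 := hpos k
    rw [key k, dif_pos h, hk] at h1
    have h2 := hle ⟨(k:ℕ)+1, h⟩
    have h3 := hLle k
    have h4 := hvM k
    exact le_antisymm h2 (by linarith)
  have hn1 : n - 1 < n := by omega
  have reach : ∀ d : ℕ, ∀ k : Fin n, x k = M → (k:ℕ) + d = n - 1 →
      x ⟨n-1, hn1⟩ = M := by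
    intro d
    induction d with
    | zero =>
      intro k hk hkd
      have : k = ⟨n-1, hn1⟩ := Fin.ext (by simp; omega)
      rwa [← this]
    | succ d ih =>
      intro k hk hkd
      have h : (k:ℕ)+1 < n := by omega
      exact ih ⟨(k:ℕ)+1, h⟩ (stepM k hk h) (by simp; omega)
  have hlast : x ⟨n-1, hn1⟩ = M :=
    reach (n - 1 - (j0:ℕ)) j0 hj0.symm (by have := j0.isLt; omega)
  have hM : M = 0 := by
    have h1 := hpos ⟨n-1, hn1⟩
    have hc : ¬(((⟨n-1, hn1⟩ : Fin n):ℕ)+1 < n) := by simp; omega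
    rw [key ⟨n-1, hn1⟩, dif_neg hc, hlast] at h1
    have h3 := hLle ⟨n-1, hn1⟩
    have h4 := hvM ⟨n-1, hn1⟩
    linarith
  have hx0 : ∀ j, x j ≤ 0 := fun j => hM ▸ hle j
  have hxi0 : x i0 = 0 := le_antisymm (hx0 i0) hcon
  have hL0 : ∀ k : Fin n,
      (if h : 0 < (k:ℕ) then x ⟨(k:ℕ)-1, by omega⟩ else 0) ≤ 0 := by
    intro k; split
    · exact hx0 _
    · exact le_refl 0
  have hR0 : ∀ k : Fin n,
      (if h : (k:ℕ)+1 < n then x ⟨(k:ℕ)+1, h⟩ else 0) ≤ 0 := by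
    intro k; split
    · exact hx0 _
    · exact le_refl 0
  have stepR0 : ∀ k : Fin n, x k = 0 → ∀ h : (k:ℕ)+1 < n, x ⟨(k:ℕ)+1, h⟩ = 0 := by
    intro k hk h
    have h1 := hpos k
    rw [key k, dif_pos h, hk] at h1
    have h2 := hx0 ⟨(k:ℕ)+1, h⟩
    have h3 := hL0 k
    linarith
  have stepL0 : ∀ k : Fin n, x k = 0 → ∀ h : 0 < (k:ℕ), x ⟨(k:ℕ)-1, by omega⟩ = 0 := by
    intro k hk h
    have h1 := hpos k
    rw [key k, dif_pos h, hk] at h1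
    have h2 := hx0 ⟨(k:ℕ)-1, by omega⟩
    have h3 := hR0 k
    linarith
  have up : ∀ d : ℕ, ∀ h : (i0:ℕ) + d < n, x ⟨(i0:ℕ) + d, h⟩ = 0 := by
    intro d
    induction d with
    | zero =>
      intro h
      have : (⟨(i0:ℕ) + 0, h⟩ : Fin n) = i0 := Fin.ext (by simp)
      rw [this]; exact hxi0
    | succ d ih =>
      intro h
      have hd : (i0:ℕ) + d < n := by omega
      have := stepR0 ⟨(i0:ℕ) + d, hd⟩ (ih hd) (by simp; omega)
      have heq : (⟨(i0:ℕ) + (d+1), h⟩ : Fin n) = ⟨((i0:ℕ)+d)+1, by omega⟩ :=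
        Fin.ext (by simp; omega)
      rw [heq]; exact this
  have down : ∀ d : ℕ, ∀ h : d ≤ (i0:ℕ), x ⟨(i0:ℕ) - d, by omega⟩ = 0 := by
    intro d
    induction d with
    | zero =>
      intro h
      have : (⟨(i0:ℕ) - 0, by omega⟩ : Fin n) = i0 := Fin.ext (by simp)
      rw [this]; exact hxi0
    | succ d ih =>
      intro h
      have hd : d ≤ (i0:ℕ) := by omega
      have := stepL0 ⟨(i0:ℕ) - d, by omega⟩ (ih hd) (by simp; omega)
      have heq : (⟨(i0:ℕ) - (d+1), by omega⟩ : Fin n)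
          = ⟨((i0:ℕ)-d)-1, by omega⟩ := Fin.ext (by simp; omega)
      rw [heq]; exact this
  have hall : ∀ j : Fin n, x j = 0 := by
    intro j
    rcases le_or_gt (i0:ℕ) (j:ℕ) with h | h
    · have := up ((j:ℕ) - (i0:ℕ)) (by have := j.isLt; omega)
      have heq : j = (⟨(i0:ℕ) + ((j:ℕ) - (i0:ℕ)), by have := j.isLt; omega⟩ : Fin n) :=
        Fin.ext (by simp; omega)
      rw [heq]; exact this
    · have := down ((i0:ℕ) - (j:ℕ)) (by omega)
      have heq : j = (⟨(i0:ℕ) - ((i0:ℕ) - (j:ℕ)), by omega⟩ : Fin n) :=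
        Fin.ext (by simp; omega)
      rw [heq]; exact this
  exact hne (by rw [show x = 0 from funext hall, Matrix.mulVec_zero])
end
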